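/- arXiv:2206.09208 — 5 statements merged into one kernel-verified Lean document; each statement's English description precedes it below -/
import Mathlib

section
/- In a unital associative algebra with the Jordan product, for every x one has e^{2 L_x} = U_{e^x}, i.e. the exponential of twice the multiplication operator equals the quadratic representation of the exponential of x. -/
/-!
Twice the Jordan multiplication splits as `2 L_x = l_x + r_x` into left and right multiplication
by `x`, which commute. Left multiplication is a ring homomorphism `A → End A` and right
multiplication one from `Aᵐᵒᵖ`, so both commute with `exp`; hence
`e^{2 L_x} = e^{l_x} e^{r_x} = l_{e^x} r_{e^x} = U_{e^x}`.
-/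

open NormedSpace

variable (𝕜 : Type*) [NontriviallyNormedField 𝕜] in
theorem mem_eball_radius_expSeries [CharZero 𝕜] [ContinuousSMul ℚ 𝕜] {B : Type*} [NormedRing B]
    [NormedAlgebra 𝕜 B] (b : B) : b ∈ Metric.eball (0 : B) (expSeries 𝕜 B).radius :=
  (expSeries_radius_eq_top 𝕜 B).symm ▸ edist_lt_top _ _

namespace ContinuousLinearMap

variable (𝕜 A : Type*) [NontriviallyNormedField 𝕜] [NormedRing A] [NormedAlgebra 𝕜 A]

noncomputable def mulLeftRingHom : A →+* (A →L[𝕜] A) :=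
  { NonUnitalAlgHom.Lmul 𝕜 A with map_one' := ext one_mul }

noncomputable def mulRightRingHom : Aᵐᵒᵖ →+* (A →L[𝕜] A) where
  toFun a := (mul 𝕜 A).flip a.unop
  map_one' := ext mul_one
  map_mul' _ _ := ext fun _ ↦ (mul_assoc _ _ _).symm
  map_zero' := ext mul_zero
  map_add' _ _ := ext fun _ ↦ mul_add _ _ _

variable {𝕜 A}

theorem commute_mul_flip_mul (a b : A) : Commute (mul 𝕜 A a) ((mul 𝕜 A).flip b) :=
  ext fun _ ↦ (mul_assoc _ _ _).symm

variable [CharZero 𝕜] [ContinuousSMul ℚ 𝕜] [CompleteSpace A]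

theorem exp_mul (a : A) : exp (mul 𝕜 A a) = mul 𝕜 A (exp a) :=
  (map_exp_of_mem_ball (mulLeftRingHom 𝕜 A) (mul 𝕜 A).continuous a
    (mem_eball_radius_expSeries 𝕜 a)).symm

theorem exp_flip_mul (a : A) : exp ((mul 𝕜 A).flip a) = (mul 𝕜 A).flip (exp a) := by
  have h := map_exp_of_mem_ball (mulRightRingHom 𝕜 A)
    ((mul 𝕜 A).flip.continuous.comp MulOpposite.continuous_unop) (MulOpposite.op a)
    (mem_eball_radius_expSeries 𝕜 _)
  rw [exp_op] at h
  exact h.symm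

theorem exp_mul_add_flip_mul (a b : A) :
    exp (mul 𝕜 A a + (mul 𝕜 A).flip b) = mulLeftRight 𝕜 A (exp a) (exp b) := by
  rw [exp_add_of_commute_of_mem_ball (commute_mul_flip_mul a b)
    (mem_eball_radius_expSeries 𝕜 _) (mem_eball_radius_expSeries 𝕜 _), exp_mul, exp_flip_mul]
  exact ext fun _ ↦ (mul_assoc _ _ _).symm

end ContinuousLinearMap

/-- In a unital associative Banach algebra with Jordan product
`x∘y = ½(xy+yx)` and `L_x y = x∘y`, one has `e^{2 L_x} = U_{e^x}`,
i.e. `exp (2 L_x) y = e^x y e^x` for all `y`. -/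
theorem stmt8 (A : Type*) [NormedRing A] [NormedAlgebra ℝ A] [CompleteSpace A]
    (L : A → A →L[ℝ] A)
    (hL : ∀ x y : A, L x y = (1 / 2 : ℝ) • (x * y + y * x)) (x : A) :
    ∀ y : A, exp ((2 : ℝ) • L x) y = exp x * y * exp x := by
  have two_smul_L : (2 : ℝ) • L x =
      ContinuousLinearMap.mul ℝ A x + (ContinuousLinearMap.mul ℝ A).flip x := by
    ext y
    simp [hL, smul_smul]
  intro y
  rw [two_smul_L, ContinuousLinearMap.exp_mul_add_flip_mul]
  exact ContinuousLinearMap.mulLeftRight_apply ℝ A _ _ y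
end

section
/- In a unital associative Banach algebra, the curve α(t) = x^{1/2} exp(t·x^{−1/2} v x^{−1/2}) x^{1/2} satisfies the geodesic equation α'' = α' α⁻¹ α' whenever x is positive invertible with square root x^{1/2}, and has α(0) = x, α'(0) = v. -/
/-!
Since `d/dt exp(t w) = w exp(t w)`, the curve `γ(t) = a exp(t w) b` has `γ' = a w exp(t w) b`
and `γ'' = a w w exp(t w) b`. When `a` and `b` are invertible, `γ(t)` is a product of units,
so `γ' γ⁻¹ γ'` telescopes to `γ''`. The theorem is the case `a = b = x^{1/2}`,
`w = x^{-1/2} v x^{-1/2}`.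
-/

open NormedSpace

theorem Units.mul_mul_ring_inverse_mul_mul {M₀ : Type*} [MonoidWithZero M₀] (a e b : M₀ˣ)
    (w : M₀) :
    (a * w * e * b : M₀) * Ring.inverse (a * e * b : M₀) * (a * w * e * b) =
      a * w * w * e * b := by
  rw [← Units.val_mul, ← Units.val_mul, Ring.inverse_unit]
  simp only [mul_inv_rev, Units.val_mul, mul_assoc, Units.mul_inv_cancel_left,
    Units.inv_mul_cancel_left]

section ExpCurve

variable {𝕂 𝔸 : Type*} [RCLike 𝕂] [NormedRing 𝔸] [NormedAlgebra 𝕂 𝔸] [CompleteSpace 𝔸]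

theorem deriv_mul_exp_smul_mul (a b w : 𝔸) :
    deriv (fun t : 𝕂 => a * exp (t • w) * b) = fun t => a * w * exp (t • w) * b := by
  funext t
  rw [(((hasDerivAt_exp_smul_const' w t).const_mul a).mul_const b).deriv, ← mul_assoc]

theorem deriv_deriv_mul_exp_smul_mul (a b : 𝔸ˣ) (w : 𝔸) (t : 𝕂) :
    deriv (deriv fun t : 𝕂 => (a : 𝔸) * exp (t • w) * b) t =
      deriv (fun t : 𝕂 => (a : 𝔸) * exp (t • w) * b) t *
        Ring.inverse ((a : 𝔸) * exp (t • w) * b) *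
        deriv (fun t : 𝕂 => (a : 𝔸) * exp (t • w) * b) t := by
  obtain ⟨e, he⟩ : IsUnit (exp (t • w)) :=
    isUnit_exp_of_mem_ball (𝕂 := 𝕂) <| (expSeries_radius_eq_top 𝕂 𝔸).symm ▸ edist_lt_top _ _
  simp only [deriv_mul_exp_smul_mul, ← he]
  exact (Units.mul_mul_ring_inverse_mul_mul a e b w).symm

end ExpCurve

theorem stmt11_general (A : Type*) [NormedRing A]
    [NormedAlgebra ℝ A] [CompleteSpace A]
    (s : Aˣ)
    (x : A) (hx : x = (s : A) * (s : A))
    (v : A)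
    (α : ℝ → A)
    (hα : ∀ t : ℝ, α t = (s : A) * exp (t • ((↑s⁻¹ : A) * v * (↑s⁻¹ : A))) * (s : A)) :
    α 0 = x ∧ deriv α 0 = v ∧
    ∀ t : ℝ, deriv (deriv α) t = deriv α t * Ring.inverse (α t) * deriv α t := by
  obtain rfl : α = fun t : ℝ => (s : A) * exp (t • ((↑s⁻¹ : A) * v * (↑s⁻¹ : A))) * s :=
    funext hα
  refine ⟨by simp [hx], ?_, deriv_deriv_mul_exp_smul_mul s s _⟩
  rw [deriv_mul_exp_smul_mul]
  simp [mul_assoc]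

/-- In a unital C*-algebra, for `x` positive invertible with square root
`x^{1/2} = s` and `v` self-adjoint, the curve
`α(t) = x^{1/2} exp(t x^{−1/2} v x^{−1/2}) x^{1/2}` satisfies `α(0) = x`,
`α'(0) = v`, and the geodesic equation `α'' = α' α⁻¹ α'`. -/
theorem stmt11 (A : Type*) [NormedRing A] [StarRing A] [CStarRing A]
    [NormedAlgebra ℝ A] [CompleteSpace A]
    (s : Aˣ) (hs : IsSelfAdjoint (s : A)) (hpos : spectrum ℝ (s : A) ⊆ Set.Ioi 0)
    (x : A) (hx : x = (s : A) * (s : A))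
    (v : A) (hv : IsSelfAdjoint v)
    (α : ℝ → A)
    (hα : ∀ t : ℝ, α t = (s : A) * exp (t • ((↑s⁻¹ : A) * v * (↑s⁻¹ : A))) * (s : A)) :
    α 0 = x ∧ deriv α 0 = v ∧
    ∀ t : ℝ, deriv (deriv α) t = deriv α t * Ring.inverse (α t) * deriv α t :=
  stmt11_general A s x hx v α hα
end

section
/- In a unital associative algebra, for invertible elements p and all a, b, c, the double-commutator curvature formula holds: Γ_p(a, Γ_p(b,c)) − Γ_p(b, Γ_p(a,c)) = ¼ p^{1/2}[[v,w],z] p^{1/2}, where Γ_p(v,w) = ½(v p⁻¹ w + w p⁻¹ v), a = p^{1/2} v p^{1/2}, b = p^{1/2} w p^{1/2}, c = p^{1/2} z p^{1/2}. -/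
/-- Curvature formula in a unital associative algebra: for `p` invertible with
square root `p^{1/2} = s`, `Γ_p(v,w) = ½(v p⁻¹ w + w p⁻¹ v)`, and
`a = p^{1/2} v p^{1/2}`, `b = p^{1/2} w p^{1/2}`, `c = p^{1/2} z p^{1/2}`,
one has `Γ_p(a, Γ_p(b,c)) − Γ_p(b, Γ_p(a,c)) = ¼ p^{1/2} [[v,w],z] p^{1/2}`. -/
theorem stmt12 (A : Type*) [Ring A] [Algebra ℝ A]
    (s : Aˣ) (p : A) (hp : p = (s : A) * (s : A))
    (Γ : A → A → A)
    (hΓ : ∀ v w : A, Γ v w = (1 / 2 : ℝ) • (v * Ring.inverse p * w + w * Ring.inverse p * v))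
    (v w z a b c : A)
    (ha : a = (s : A) * v * (s : A)) (hb : b = (s : A) * w * (s : A))
    (hc : c = (s : A) * z * (s : A)) :
    Γ a (Γ b c) - Γ b (Γ a c)
      = (1 / 4 : ℝ) • ((s : A) * ((v * w - w * v) * z - z * (v * w - w * v)) * (s : A)) := by
  have hinv : Ring.inverse p = ((s⁻¹ : Aˣ) : A) * ((s⁻¹ : Aˣ) : A) := by
    rw [hp, ← Units.val_mul, Ring.inverse_unit (s * s), mul_inv_rev, Units.val_mul]
  subst ha hb hc
  simp only [hΓ, hinv, smul_add, smul_smul, mul_smul_comm, smul_mul_assoc,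
    mul_add, add_mul, mul_sub, sub_mul, mul_assoc, Units.inv_mul_cancel_left, Units.mul_inv_cancel_left]
  norm_num
  module
end

section
/- For any bounded operators T, S on a Banach space, (sinh(ad T)/ad T)(S) = ∫₀¹ e^{(2s−1)T} S e^{(1−2s)T} ds, where sinh(λ)/λ is interpreted via its everywhere-convergent power series applied to ad T = [T, ·]. -/
/-!
`ad T = L_T - R_T` is the difference of the commuting left and right multiplications by `T`,
so `exp (t • ad T) S = exp (t • T) * S * exp (-t • T)`. Integrating the exponential series of
`(2u - 1) • ad T` termwise over `[0, 1]` gives `∑ₙ (∫₀¹ (2u - 1)ⁿ du) (ad T)ⁿ / n!`, and this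
integral is `0` for odd `n` and `1 / (n + 1)` for even `n`.
-/

open NormedSpace ContinuousLinearMap MeasureTheory
open scoped Nat

section adL

variable (𝕜 : Type*) {𝔸 : Type*} [RCLike 𝕜] [NormedRing 𝔸] [NormedAlgebra 𝕜 𝔸]

noncomputable def adL (T : 𝔸) : 𝔸 →L[𝕜] 𝔸 := mul 𝕜 𝔸 T - (mul 𝕜 𝔸).flip T

variable {𝕜}

@[simp]
lemma adL_apply (T U : 𝔸) : adL 𝕜 T U = T * U - U * T := rfl

lemma adL_smul (c : 𝕜) (T : 𝔸) : adL 𝕜 (c • T) = c • adL 𝕜 T := by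
  ext U; simp [smul_sub]

lemma pow_mul_apply (T U : 𝔸) (n : ℕ) : (mul 𝕜 𝔸 T ^ n) U = T ^ n * U := by
  induction n with
  | zero => simp
  | succ n ih => rw [pow_succ', pow_succ', mul_apply_eq_comp, ih, mul_apply', mul_assoc]

lemma pow_flip_mul_apply (T U : 𝔸) (n : ℕ) : ((mul 𝕜 𝔸).flip T ^ n) U = U * T ^ n := by
  induction n with
  | zero => simp
  | succ n ih =>
    rw [pow_succ', pow_succ, mul_apply_eq_comp, ih, flip_apply, mul_apply', mul_assoc]

variable [CompleteSpace 𝔸]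

lemma hasSum_exp_smul (t : 𝕜) (D : 𝔸) :
    HasSum (fun n => ((n ! : 𝕜)⁻¹ * t ^ n) • D ^ n) (exp (t • D)) := by
  simpa only [smul_pow, smul_smul, mul_comm] using exp_series_hasSum_exp' (𝕂 := 𝕜) (t • D)

lemma exp_mul_apply (T U : 𝔸) : exp (mul 𝕜 𝔸 T) U = exp T * U := by
  refine ((exp_series_hasSum_exp' (𝕂 := 𝕜) (mul 𝕜 𝔸 T)).mapL (apply 𝕜 𝔸 U)).unique ?_
  simpa only [apply_apply, smul_apply, pow_mul_apply, flip_apply, mul_apply', smul_mul_assoc]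
    using (exp_series_hasSum_exp' (𝕂 := 𝕜) T).mapL ((mul 𝕜 𝔸).flip U)

lemma exp_flip_mul_apply (T U : 𝔸) : exp ((mul 𝕜 𝔸).flip T) U = U * exp T := by
  refine ((exp_series_hasSum_exp' (𝕂 := 𝕜) ((mul 𝕜 𝔸).flip T)).mapL (apply 𝕜 𝔸 U)).unique ?_
  simpa only [apply_apply, smul_apply, pow_flip_mul_apply, mul_apply', mul_smul_comm]
    using (exp_series_hasSum_exp' (𝕂 := 𝕜) T).mapL (mul 𝕜 𝔸 U)

lemma exp_adL_apply (T U : 𝔸) : exp (adL 𝕜 T) U = exp T * U * exp (-T) := by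
  -- `exp_add_of_commute` is stated for normed `ℚ`-algebras
  let +nondep : NormedAlgebra ℚ (𝔸 →L[𝕜] 𝔸) := .restrictScalars ℚ 𝕜 (𝔸 →L[𝕜] 𝔸)
  have hcomm : Commute (mul 𝕜 𝔸 T) ((mul 𝕜 𝔸).flip (-T)) := by
    ext V; simp [mul_assoc]
  rw [adL, sub_eq_add_neg, ← map_neg, exp_add_of_commute hcomm, mul_apply_eq_comp,
    exp_flip_mul_apply, exp_mul_apply, mul_assoc]

end adL

lemma integral_two_mul_sub_one_pow (n : ℕ) :
    ∫ u in (0 : ℝ)..1, (2 * u - 1) ^ n = (1 - (-1) ^ (n + 1)) / (2 * (n + 1)) := by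
  rw [intervalIntegral.integral_comp_mul_sub (fun v : ℝ => v ^ n) two_ne_zero, integral_pow]
  norm_num
  field_simp

lemma integral_two_mul_sub_one_pow_even (k : ℕ) :
    ∫ u in (0 : ℝ)..1, (2 * u - 1) ^ (2 * k) = ((2 * k + 1 : ℕ) : ℝ)⁻¹ := by
  rw [integral_two_mul_sub_one_pow, (Odd.neg_one_pow ⟨k, rfl⟩ : (-1 : ℝ) ^ (2 * k + 1) = -1)]
  push_cast
  field_simp
  ring

lemma integral_two_mul_sub_one_pow_odd (k : ℕ) :
    ∫ u in (0 : ℝ)..1, (2 * u - 1) ^ (2 * k + 1) = 0 := by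
  rw [integral_two_mul_sub_one_pow,
    (Even.neg_one_pow ⟨k + 1, by ring⟩ : (-1 : ℝ) ^ (2 * k + 1 + 1) = 1)]
  simp

section Real

variable {𝔸 : Type*} [NormedRing 𝔸] [NormedAlgebra ℝ 𝔸] [CompleteSpace 𝔸]

lemma hasSum_integral_exp_smul (D : 𝔸) :
    HasSum (fun n => ((n ! : ℝ)⁻¹ * ∫ u in (0 : ℝ)..1, (2 * u - 1) ^ n) • D ^ n)
      (∫ u in (0 : ℝ)..1, exp ((2 * u - 1) • D)) := by
  have h := intervalIntegral.hasSum_integral_of_dominated_convergence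
    (μ := volume) (a := 0) (b := 1)
    (F := fun n u => ((n ! : ℝ)⁻¹ * (2 * u - 1) ^ n) • D ^ n)
    (fun n _ => ‖(n ! : ℝ)⁻¹ • D ^ n‖) (fun _ => by fun_prop) ?_
    (.of_forall fun _ _ => norm_expSeries_summable' D) intervalIntegrable_const
    (.of_forall fun u _ => hasSum_exp_smul _ D)
  · simpa only [intervalIntegral.integral_smul_const, intervalIntegral.integral_const_mul] using h
  · refine fun n => .of_forall fun u hu => ?_
    rw [Set.uIoc_of_le zero_le_one] at hu
    rw [mul_comm, mul_smul, norm_smul, norm_pow]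
    refine mul_le_of_le_one_left (norm_nonneg _) (pow_le_one₀ (norm_nonneg _) ?_)
    rw [Real.norm_eq_abs, abs_le]
    constructor <;> linarith [hu.1, hu.2]

lemma hasSum_sinhc_integral (D : 𝔸) :
    HasSum (fun k => ((2 * k + 1)! : ℝ)⁻¹ • D ^ (2 * k))
      (∫ u in (0 : ℝ)..1, exp ((2 * u - 1) • D)) := by
  have h := ((mul_right_injective₀ (two_ne_zero (α := ℕ))).hasSum_iff ?_).2
    (hasSum_integral_exp_smul D)
  · convert h using 2 with k
    rw [Function.comp_apply, integral_two_mul_sub_one_pow_even, Nat.factorial_succ, Nat.cast_mul,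
      mul_inv_rev]
  · intro n hn
    obtain ⟨k, rfl⟩ : Odd n := by simpa [Nat.odd_iff, Nat.even_iff] using hn
    rw [integral_two_mul_sub_one_pow_odd, mul_zero, zero_smul]

lemma hasSum_sinhc_adL_apply (T S : 𝔸) :
    HasSum (fun k => ((2 * k + 1)! : ℝ)⁻¹ • (adL ℝ T ^ (2 * k)) S)
      (∫ u in (0 : ℝ)..1, exp ((2 * u - 1) • T) * S * exp ((1 - 2 * u) • T)) := by
  let +nondep : NormedAlgebra ℚ (𝔸 →L[ℝ] 𝔸) := .restrictScalars ℚ ℝ (𝔸 →L[ℝ] 𝔸)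
  have hint : IntervalIntegrable (fun u : ℝ => exp ((2 * u - 1) • adL ℝ T)) volume 0 1 :=
    Continuous.intervalIntegrable (by fun_prop) _ _
  have hintegrand (u : ℝ) :
      exp ((2 * u - 1) • T) * S * exp ((1 - 2 * u) • T) = exp ((2 * u - 1) • adL ℝ T) S := by
    rw [← adL_smul, exp_adL_apply, ← neg_smul, neg_sub]
  simp_rw [hintegrand, ← ContinuousLinearMap.intervalIntegral_apply hint]
  exact (hasSum_sinhc_integral (adL ℝ T)).mapL (apply ℝ 𝔸 S)

end Real

/-- For bounded operators `T, S` on a Banach space,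
`(sinh(ad T)/ad T)(S) = ∫₀¹ e^{(2s−1)T} S e^{(1−2s)T} ds`, where
`sinh(λ)/λ = Σ λ^{2n}/(2n+1)!` is applied to `ad T = [T, ·]`. -/
theorem stmt13 (X : Type*) [NormedAddCommGroup X] [NormedSpace ℝ X] [CompleteSpace X]
    (T S : X →L[ℝ] X)
    (adT : (X →L[ℝ] X) → (X →L[ℝ] X))
    (hadT : ∀ U : X →L[ℝ] X, adT U = T ∘L U - U ∘L T) :
    (∑' n : ℕ, ((Nat.factorial (2 * n + 1) : ℝ)⁻¹) • adT^[2 * n] S)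
      = ∫ u in (0 : ℝ)..1,
          exp ((2 * u - 1) • T) ∘L S ∘L exp ((1 - 2 * u) • T) := by
  have hadT_eq : adT = adL ℝ T := funext hadT
  simp_rw [hadT_eq, ← FunLike.coe_pow_eq_iterate]
  exact (hasSum_sinhc_adL_apply T S).tsum_eq
end

section
/- If V is a finite-dimensional Euclidean Jordan algebra with trace inner product (v|w) = tr(v∘w), then every derivation D of V satisfies Tr(D²) ≤ 0, with equality only if D = 0. -/
/-!
Since `D` is a derivation, `L_{Dz} = [D, L_z]` is a commutator and has trace zero; expanding
`Tr(L_{D(xy)}) = 0` shows that `D` is skew-adjoint for the trace form. In an orthonormal basis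
`(eᵢ)` for that form, `Tr(D²) = ∑ (eᵢ | D² eᵢ) = -∑ (D eᵢ | D eᵢ)`.
-/

open LinearMap (BilinForm)
open scoped InnerProductSpace

namespace LinearMap

section Derivation

variable {R V : Type*} [CommRing R] [AddCommGroup V] [Module R V]

/-- `(x, y) ↦ Tr(L_{x y})`, where `L_v = mul v`. -/
noncomputable def traceForm [Module.Free R V] [Module.Finite R V] (mul : V →ₗ[R] V →ₗ[R] V) :
    BilinForm R V :=
  mul.compr₂ (trace R V ∘ₗ mul)

theorem mul_apply_derivation_eq_commutator {mul : V →ₗ[R] V →ₗ[R] V} {D : V →ₗ[R] V}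
    (hD : ∀ x y, D (mul x y) = mul (D x) y + mul x (D y)) (z : V) :
    mul (D z) = D ∘ₗ mul z - mul z ∘ₗ D := by
  ext y
  simp only [sub_apply, comp_apply, hD z y, add_sub_cancel_right]

variable [Module.Free R V] [Module.Finite R V]

theorem trace_mul_apply_derivation {mul : V →ₗ[R] V →ₗ[R] V} {D : V →ₗ[R] V}
    (hD : ∀ x y, D (mul x y) = mul (D x) y + mul x (D y)) (z : V) :
    trace R V (mul (D z)) = 0 := by
  rw [mul_apply_derivation_eq_commutator hD, map_sub, trace_comp_comm', sub_self]

theorem traceForm_isSymm {mul : V →ₗ[R] V →ₗ[R] V} (comm : ∀ x y, mul x y = mul y x) :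
    (traceForm mul).IsSymm :=
  ⟨fun x y => by simp only [traceForm, compr₂_apply, comm x y]⟩

theorem traceForm_isSkewAdjoint {mul : V →ₗ[R] V →ₗ[R] V} {D : V →ₗ[R] V}
    (hD : ∀ x y, D (mul x y) = mul (D x) y + mul x (D y)) :
    (traceForm mul).IsSkewAdjoint D := by
  intro x y
  have h := trace_mul_apply_derivation hD (mul x y)
  rw [hD, map_add, map_add, add_eq_zero_iff_eq_neg] at h
  simpa [traceForm] using h

end Derivation

section InnerProductSpace

variable {E ι : Type*} [NormedAddCommGroup E] [InnerProductSpace ℝ E] [Fintype ι]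

theorem trace_comp_self_eq_neg_sum_norm_sq {f : E →ₗ[ℝ] E}
    (hf : ∀ x y, ⟪f x, y⟫_ℝ = -⟪x, f y⟫_ℝ) (b : OrthonormalBasis ι ℝ E) :
    trace ℝ E (f ∘ₗ f) = -∑ i, ‖f (b i)‖ ^ 2 := by
  rw [trace_eq_sum_inner _ b, ← Finset.sum_neg_distrib]
  refine Fintype.sum_congr _ _ fun i => ?_
  rw [comp_apply, ← real_inner_self_eq_norm_sq, hf, neg_neg]

variable [FiniteDimensional ℝ E]

theorem trace_comp_self_nonpos_of_skew {f : E →ₗ[ℝ] E}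
    (hf : ∀ x y, ⟪f x, y⟫_ℝ = -⟪x, f y⟫_ℝ) : trace ℝ E (f ∘ₗ f) ≤ 0 := by
  rw [trace_comp_self_eq_neg_sum_norm_sq hf (stdOrthonormalBasis ℝ E), neg_nonpos]
  positivity

theorem eq_zero_of_trace_comp_self_eq_zero_of_skew {f : E →ₗ[ℝ] E}
    (hf : ∀ x y, ⟪f x, y⟫_ℝ = -⟪x, f y⟫_ℝ) (h : trace ℝ E (f ∘ₗ f) = 0) : f = 0 := by
  let b := stdOrthonormalBasis ℝ E
  rw [trace_comp_self_eq_neg_sum_norm_sq hf b, neg_eq_zero,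
    Finset.sum_eq_zero_iff_of_nonneg fun i _ => by positivity] at h
  exact b.toBasis.ext fun i => by simpa using h i (Finset.mem_univ i)

end InnerProductSpace

namespace BilinForm

variable {V : Type*} [AddCommGroup V] [Module ℝ V]

noncomputable abbrev innerProductCore (B : BilinForm ℝ V) (hB : B.IsSymm)
    (hpos : ∀ v, v ≠ 0 → 0 < B v v) : InnerProductSpace.Core ℝ V where
  inner := fun x y => B x y
  conj_inner_symm x y := hB.eq y x
  re_inner_nonneg x := by
    rcases eq_or_ne x 0 with rfl | hx
    · simp
    · exact (hpos x hx).le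
  add_left x y z := by simp
  smul_left x y r := by simp
  definite x hx := by
    by_contra h
    exact (hpos x h).ne' hx

end BilinForm

namespace IsSkewAdjoint

variable {V : Type*} [AddCommGroup V] [Module ℝ V] [FiniteDimensional ℝ V]
  {B : BilinForm ℝ V} {f : V →ₗ[ℝ] V}

theorem trace_comp_self_nonpos (hf : B.IsSkewAdjoint f) (hB : B.IsSymm)
    (hpos : ∀ v, v ≠ 0 → 0 < B v v) : trace ℝ V (f ∘ₗ f) ≤ 0 :=
  letI := (B.innerProductCore hB hpos).toNormedAddCommGroup
  letI := InnerProductSpace.ofCore (B.innerProductCore hB hpos).toCore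
  trace_comp_self_nonpos_of_skew fun x y => (hf x y).trans (map_neg _ _)

theorem eq_zero_of_trace_comp_self_eq_zero (hf : B.IsSkewAdjoint f) (hB : B.IsSymm)
    (hpos : ∀ v, v ≠ 0 → 0 < B v v) (h : trace ℝ V (f ∘ₗ f) = 0) : f = 0 :=
  letI := (B.innerProductCore hB hpos).toNormedAddCommGroup
  letI := InnerProductSpace.ofCore (B.innerProductCore hB hpos).toCore
  eq_zero_of_trace_comp_self_eq_zero_of_skew (fun x y => (hf x y).trans (map_neg _ _)) h

end IsSkewAdjoint

end LinearMap

theorem stmt14_general (V : Type*) [AddCommGroup V] [Module ℝ V] [FiniteDimensional ℝ V]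
    (mul : V →ₗ[ℝ] V →ₗ[ℝ] V)
    (comm : ∀ x y : V, mul x y = mul y x)
    (hpos : ∀ v : V, v ≠ 0 → 0 < LinearMap.trace ℝ V (mul (mul v v)))
    (D : V →ₗ[ℝ] V)
    (hD : ∀ x y : V, D (mul x y) = mul (D x) y + mul x (D y)) :
    LinearMap.trace ℝ V (D ∘ₗ D) ≤ 0 ∧
    (LinearMap.trace ℝ V (D ∘ₗ D) = 0 → D = 0) := by
  have hskew := LinearMap.traceForm_isSkewAdjoint hD
  have hsymm := LinearMap.traceForm_isSymm comm
  exact ⟨LinearMap.IsSkewAdjoint.trace_comp_self_nonpos hskew hsymm hpos,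
    LinearMap.IsSkewAdjoint.eq_zero_of_trace_comp_self_eq_zero hskew hsymm hpos⟩

/-- In a finite-dimensional Euclidean Jordan algebra (trace form
`(v|w) = tr(v∘w) = Tr(L_{v∘w})` positive definite), every derivation `D`
satisfies `Tr(D²) ≤ 0`, with equality only if `D = 0`. -/
theorem stmt14 (V : Type*) [AddCommGroup V] [Module ℝ V] [FiniteDimensional ℝ V]
    (mul : V →ₗ[ℝ] V →ₗ[ℝ] V)
    (comm : ∀ x y : V, mul x y = mul y x)
    (jordan : ∀ x y : V, mul (mul x x) (mul x y) = mul x (mul (mul x x) y))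
    (hpos : ∀ v : V, v ≠ 0 → 0 < LinearMap.trace ℝ V (mul (mul v v)))
    (D : V →ₗ[ℝ] V)
    (hD : ∀ x y : V, D (mul x y) = mul (D x) y + mul x (D y)) :
    LinearMap.trace ℝ V (D ∘ₗ D) ≤ 0 ∧
    (LinearMap.trace ℝ V (D ∘ₗ D) = 0 → D = 0) :=
  stmt14_general V mul comm hpos D hD
end
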